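/- Let F be a commutative ring, q, t ∈ F, and let V = ℕ →₀ F be the free F-module with basis (e_k)_{k∈ℕ}. Define F-linear maps Δ : V → V ⊗ V by Δ(e_k) = Σ_{m=0}^{k} [k m]_q e_{k-m} ⊗ e_m, ε : V → F by ε(e_k) = 1 if k = 0 and 0 otherwise, and δ : V → V ⊗ V by δ(e_k) = Σ_{m=0}^{k} [k m]_q · (t·q^m ; q)_{k-m} · e_{k-m} ⊗ e_m. Then δ is a counital coassociative left coaction: (ε ⊗ id_V) ∘ δ = id_V (under the canonical identification F ⊗ V ≅ V) and (Δ ⊗ id_V) ∘ δ = (id_V ⊗ δ) ∘ δ as maps V → V ⊗ V ⊗ V. -/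
import Mathlib


/-!
Statement 9: on the free module `V = ℕ →₀ F`, the map
`δ(e_k) = Σ_m [k m]_q (t q^m ; q)_{k−m} e_{k−m} ⊗ e_m` is a counital, coassociative
left coaction over the coalgebra `(V, Δ, ε)` of the rank-1 braided tensor algebra.
-/

open scoped TensorProduct

/-- The Gaussian binomial coefficient `[k m]_q` evaluated at an element `q` of a ring,
defined by `[k 0]_q = 1`, `[0 (m+1)]_q = 0` and the q-Pascal recurrence
`[k+1, m+1]_q = [k m]_q + q^(m+1) * [k, m+1]_q`. -/
def qBinom {R : Type*} [Ring R] (q : R) : ℕ → ℕ → R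
  | _, 0 => 1
  | 0, _ + 1 => 0
  | k + 1, m + 1 => qBinom q k m + q ^ (m + 1) * qBinom q k (m + 1)

/-- The q-Pochhammer symbol `(z;q)_n = ∏_{i=0}^{n−1} (1 − z q^i)`. -/
def qPoch {R : Type*} [CommRing R] (z q : R) (n : ℕ) : R :=
  ∏ i ∈ Finset.range n, (1 - z * q ^ i)

lemma qBinom_eq_zero {R : Type*} [Ring R] (q : R) : ∀ {k m : ℕ}, k < m → qBinom q k m = 0
  | 0, _ + 1, _ => rfl
  | k + 1, m + 1, h => by
      simp only [qBinom, qBinom_eq_zero q (by omega : k < m),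
        qBinom_eq_zero q (by omega : k < m + 1), mul_zero, add_zero]

lemma qBinom_self {R : Type*} [Ring R] (q : R) : ∀ k : ℕ, qBinom q k k = 1
  | 0 => rfl
  | k + 1 => by
      simp [qBinom, qBinom_self q k, qBinom_eq_zero q (by omega : k < k + 1)]

lemma map_qBinom {R S : Type*} [Ring R] [Ring S] (f : R →+* S) (q : R) :
    ∀ k m : ℕ, f (qBinom q k m) = qBinom (f q) k m
  | 0, 0 => by simp [qBinom]
  | k + 1, 0 => by simp [qBinom]
  | 0, m + 1 => by simp [qBinom]
  | k + 1, m + 1 => by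
      simp [qBinom, map_qBinom f q k m, map_qBinom f q k (m + 1)]

lemma qPoch_zero {R : Type*} [CommRing R] (z q : R) : qPoch z q 0 = 1 := rfl

lemma qPoch_succ {R : Type*} [CommRing R] (z q : R) (n : ℕ) :
    qPoch z q (n + 1) = qPoch z q n * (1 - z * q ^ n) := Finset.prod_range_succ _ n

lemma qPoch_add {R : Type*} [CommRing R] (z q : R) (m n : ℕ) :
    qPoch z q (m + n) = qPoch z q m * qPoch (z * q ^ m) q n := by
  unfold qPoch
  rw [Finset.prod_range_add]
  congr 1
  refine Finset.prod_congr rfl fun i _ => ?_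
  rw [pow_add]; ring

lemma qBinom_mul_qPoch {R : Type*} [CommRing R] (q : R) :
    ∀ k m : ℕ, m ≤ k →
      qBinom q k m * (qPoch q q m * qPoch q q (k - m)) = qPoch q q k
  | 0, 0, _ => by simp [qBinom, qPoch_zero]
  | k + 1, 0, _ => by simp [qBinom, qPoch_zero]
  | k + 1, m + 1, h => by
      rcases eq_or_lt_of_le h with he | hlt
      · obtain rfl : m = k := by omega
        simp [qBinom_self, qPoch_zero]
      · have hm : m ≤ k := by omega
        have hm1 : m + 1 ≤ k := by omega
        obtain ⟨a, rfl⟩ : ∃ a, k = m + 1 + a := ⟨k - (m + 1), by omega⟩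
        have ih1 := qBinom_mul_qPoch q (m + 1 + a) m hm
        have ih2 := qBinom_mul_qPoch q (m + 1 + a) (m + 1) hm1
        have e1 : m + 1 + a - m = a + 1 := by omega
        have e2 : m + 1 + a - (m + 1) = a := by omega
        have e3 : m + 1 + a + 1 - (m + 1) = a + 1 := by omega
        rw [e1] at ih1
        rw [e2] at ih2
        rw [e3]
        show (qBinom q (m+1+a) m + q ^ (m + 1) * qBinom q (m+1+a) (m+1)) *
          (qPoch q q (m+1) * qPoch q q (a+1)) = qPoch q q (m+1+a+1)
        rw [qPoch_succ q q (m + 1 + a)]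
        rw [qPoch_succ q q m] at ih2 ⊢
        rw [qPoch_succ q q a] at ih1 ⊢
        have hq : (q : R) * q ^ (m + 1 + a) = (q * q ^ m) * (q * q ^ a) := by
          ring
        linear_combination (1 - q * q ^ m) * ih1 + (q * q ^ m) * (1 - q * q ^ a) * ih2 +
          qPoch q q (m + 1 + a) * hq
open Polynomial in
lemma qPoch_X_ne_zero (n : ℕ) : qPoch (X : Polynomial ℤ) X n ≠ 0 := by
  unfold qPoch
  rw [Finset.prod_ne_zero_iff]
  intro i _
  intro h
  have := congrArg (Polynomial.eval 0) h
  simp at this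

open Polynomial in
lemma qBinom_trinomial_X {k b c : ℕ} (h : b + c ≤ k) :
    qBinom (X : Polynomial ℤ) k c * qBinom (X : Polynomial ℤ) (k - c) b =
      qBinom (X : Polynomial ℤ) k (b + c) * qBinom (X : Polynomial ℤ) (b + c) c := by
  set q : Polynomial ℤ := X
  have h1 := qBinom_mul_qPoch q k c (by omega)
  have h2 := qBinom_mul_qPoch q (k - c) b (by omega)
  have h3 := qBinom_mul_qPoch q k (b + c) (by omega)
  have h4 := qBinom_mul_qPoch q (b + c) c (by omega)
  have e1 : k - c - b = k - (b + c) := by omega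
  have e2 : b + c - c = b := by omega
  rw [e1] at h2
  rw [e2] at h4
  have hne : qPoch q q c * (qPoch q q b * qPoch q q (k - (b + c))) ≠ 0 :=
    mul_ne_zero (qPoch_X_ne_zero c) (mul_ne_zero (qPoch_X_ne_zero b) (qPoch_X_ne_zero (k - (b+c))))
  apply mul_right_cancel₀ hne
  calc qBinom q k c * qBinom q (k - c) b *
        (qPoch q q c * (qPoch q q b * qPoch q q (k - (b + c))))
      = qBinom q k c * (qPoch q q c * (qBinom q (k-c) b * (qPoch q q b * qPoch q q (k - (b+c))))) := by
        ring
    _ = qBinom q k c * (qPoch q q c * qPoch q q (k - c)) := by rw [h2]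
    _ = qPoch q q k := h1
    _ = qBinom q k (b+c) * (qPoch q q (b+c) * qPoch q q (k - (b+c))) := h3.symm
    _ = qBinom q k (b+c) * ((qBinom q (b+c) c * (qPoch q q c * qPoch q q b)) * qPoch q q (k - (b+c))) := by
        rw [h4]
    _ = qBinom q k (b + c) * qBinom q (b + c) c *
        (qPoch q q c * (qPoch q q b * qPoch q q (k - (b + c)))) := by ring

lemma qBinom_trinomial {F : Type*} [CommRing F] (q : F) {k b c : ℕ} (h : b + c ≤ k) :
    qBinom q k c * qBinom q (k - c) b = qBinom q k (b + c) * qBinom q (b + c) c := by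
  have hm : ∀ k m : ℕ, (Polynomial.aeval q : Polynomial ℤ →ₐ[ℤ] F) (qBinom Polynomial.X k m)
      = qBinom q k m := by
    intro k m
    simpa using map_qBinom (Polynomial.aeval q : Polynomial ℤ →ₐ[ℤ] F).toRingHom Polynomial.X k m
  have := congrArg (Polynomial.aeval q : Polynomial ℤ →ₐ[ℤ] F) (qBinom_trinomial_X h)
  simpa [map_mul, hm] using this
lemma tri_reindex {M : Type*} [AddCommMonoid M] (k : ℕ) (f : ℕ → ℕ → M) :
    ∑ m ∈ Finset.range (k + 1), ∑ j ∈ Finset.range (m + 1), f m j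
      = ∑ c ∈ Finset.range (k + 1), ∑ b ∈ Finset.range (k - c + 1), f (b + c) c := by
  rw [Finset.sum_sigma', Finset.sum_sigma']
  refine Finset.sum_nbij' (fun p => ⟨p.2, p.1 - p.2⟩) (fun p => ⟨p.2 + p.1, p.1⟩) ?_ ?_ ?_ ?_ ?_
  · rintro ⟨m, j⟩ hp
    simp only [Finset.mem_sigma, Finset.mem_range] at hp ⊢
    omega
  · rintro ⟨c, b⟩ hp
    simp only [Finset.mem_sigma, Finset.mem_range] at hp ⊢
    omega
  · rintro ⟨m, j⟩ hp
    simp only [Finset.mem_sigma, Finset.mem_range] at hp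
    simp only [Sigma.mk.inj_iff]
    constructor
    · omega
    · exact heq_of_eq rfl
  · rintro ⟨c, b⟩ hp
    simp only [Finset.mem_sigma, Finset.mem_range] at hp
    simp only [Sigma.mk.inj_iff]
    constructor
    · trivial
    · rw [Nat.add_sub_cancel]
  · rintro ⟨m, j⟩ hp
    simp only [Finset.mem_sigma, Finset.mem_range] at hp
    simp only []
    congr 1
    omega

theorem deltaL_counital_coassoc {F : Type*} [CommRing F] (q t : F)
    (Δ : (ℕ →₀ F) →ₗ[F] (ℕ →₀ F) ⊗[F] (ℕ →₀ F))
    (hΔ : ∀ k : ℕ, Δ (Finsupp.single k 1) =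
      ∑ m ∈ Finset.range (k + 1),
        qBinom q k m • (Finsupp.single (k - m) (1 : F) ⊗ₜ[F] Finsupp.single m (1 : F)))
    (ε : (ℕ →₀ F) →ₗ[F] F)
    (hε : ∀ k : ℕ, ε (Finsupp.single k 1) = if k = 0 then 1 else 0)
    (δ : (ℕ →₀ F) →ₗ[F] (ℕ →₀ F) ⊗[F] (ℕ →₀ F))
    (hδ : ∀ k : ℕ, δ (Finsupp.single k 1) =
      ∑ m ∈ Finset.range (k + 1),
        (qBinom q k m * qPoch (t * q ^ m) q (k - m)) •
          (Finsupp.single (k - m) (1 : F) ⊗ₜ[F] Finsupp.single m (1 : F))) :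
    (TensorProduct.lid F (ℕ →₀ F)).toLinearMap ∘ₗ
        TensorProduct.map ε LinearMap.id ∘ₗ δ = LinearMap.id ∧
    (TensorProduct.assoc F (ℕ →₀ F) (ℕ →₀ F) (ℕ →₀ F)).toLinearMap ∘ₗ
        TensorProduct.map Δ LinearMap.id ∘ₗ δ =
      TensorProduct.map LinearMap.id δ ∘ₗ δ := by
  constructor
  · refine Finsupp.lhom_ext fun k y => ?_
    have hy : (Finsupp.single k y : ℕ →₀ F) = y • Finsupp.single k 1 := by
      rw [Finsupp.smul_single, smul_eq_mul, mul_one]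
    rw [hy, map_smul, map_smul]
    congr 1
    simp only [LinearMap.comp_apply, LinearMap.id_apply]
    rw [hδ k, map_sum, map_sum,
      Finset.sum_eq_single_of_mem k (Finset.self_mem_range_succ k)]
    · simp [qBinom_self, qPoch_zero, hε, TensorProduct.lid_tmul]
    · intro m hm hne
      have h0 : ¬ (k - m = 0) := by
        simp only [Finset.mem_range] at hm; omega
      simp [hε, h0, map_zero]
  · refine Finsupp.lhom_ext fun k y => ?_
    have hy : (Finsupp.single k y : ℕ →₀ F) = y • Finsupp.single k 1 := by
      rw [Finsupp.smul_single, smul_eq_mul, mul_one]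
    rw [hy, map_smul, map_smul]
    congr 1
    simp only [LinearMap.comp_apply]
    rw [hδ k, map_sum, map_sum, map_sum]
    have L : ∀ m : ℕ, (TensorProduct.assoc F (ℕ →₀ F) (ℕ →₀ F) (ℕ →₀ F)).toLinearMap
        (TensorProduct.map Δ LinearMap.id
          ((qBinom q k m * qPoch (t * q ^ m) q (k - m)) •
            (Finsupp.single (k - m) (1 : F) ⊗ₜ[F] Finsupp.single m (1 : F))))
        = ∑ j ∈ Finset.range (k - m + 1),
            ((qBinom q k m * qPoch (t * q ^ m) q (k - m)) * qBinom q (k - m) j) •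
              (Finsupp.single (k - m - j) (1 : F) ⊗ₜ[F]
                (Finsupp.single j (1 : F) ⊗ₜ[F] Finsupp.single m (1 : F))) := by
      intro m
      rw [map_smul, map_smul, TensorProduct.map_tmul, LinearMap.id_apply, hΔ,
        TensorProduct.sum_tmul, map_sum, Finset.smul_sum]
      refine Finset.sum_congr rfl fun j _ => ?_
      rw [← TensorProduct.smul_tmul', map_smul]
      simp only [LinearEquiv.coe_coe, TensorProduct.assoc_tmul, smul_smul]
    have R : ∀ m : ℕ, TensorProduct.map LinearMap.id δ
        ((qBinom q k m * qPoch (t * q ^ m) q (k - m)) •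
          (Finsupp.single (k - m) (1 : F) ⊗ₜ[F] Finsupp.single m (1 : F)))
        = ∑ j ∈ Finset.range (m + 1),
            ((qBinom q k m * qPoch (t * q ^ m) q (k - m)) *
                (qBinom q m j * qPoch (t * q ^ j) q (m - j))) •
              (Finsupp.single (k - m) (1 : F) ⊗ₜ[F]
                (Finsupp.single (m - j) (1 : F) ⊗ₜ[F] Finsupp.single j (1 : F))) := by
      intro m
      rw [map_smul, TensorProduct.map_tmul, LinearMap.id_apply, hδ,
        TensorProduct.tmul_sum, Finset.smul_sum]
      refine Finset.sum_congr rfl fun j _ => ?_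
      rw [TensorProduct.tmul_smul, smul_smul]
    rw [Finset.sum_congr rfl fun m _ => L m, Finset.sum_congr rfl fun m _ => R m,
      tri_reindex k]
    refine Finset.sum_congr rfl fun c hc => Finset.sum_congr rfl fun b hb => ?_
    simp only [Finset.mem_range] at hc hb
    have hbc : b + c ≤ k := by omega
    have e1 : k - c - b = k - (b + c) := by omega
    have e2 : b + c - c = b := by omega
    rw [e1, e2]
    congr 1
    have hP : qPoch (t * q ^ c) q (k - c)
        = qPoch (t * q ^ c) q b * qPoch (t * q ^ (b + c)) q (k - (b + c)) := by
      have e3 : k - c = b + (k - (b + c)) := by omega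
      rw [e3, qPoch_add]
      have hz : t * q ^ c * q ^ b = t * q ^ (b + c) := by
        rw [pow_add]; ring
      rw [hz]
    have ht := qBinom_trinomial q hbc
    rw [hP]
    linear_combination (qPoch (t * q ^ c) q b * qPoch (t * q ^ (b + c)) q (k - (b + c))) * ht
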